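/- arXiv:1903.04205 — 4 statements merged into one kernel-verified Lean document; each statement's English description precedes it below -/
import Mathlib

section
/- In the setting where an α-strong validator votes constantly with deposit α·D_0 and the remaining (1−α)·D_0 validators never vote, finalisation resumes at the first epoch k for which the voting validator's deposit is at least 2/3 of the total deposit; this holds if and only if ∏_{i=0}^{k−1}(1+ρ_i) ≥ 2(1−α)/α. -/
theorem two_thirds_mul_add_le_iff {x y : ℝ} : 2 / 3 * (x + y) ≤ x ↔ 2 * y ≤ x := by
  constructor <;> intro h <;> linarith

theorem two_mul_mul_inv_le_iff {a b D P : ℝ} (ha : 0 < a) (hD : 0 < D) (hP : 0 < P) :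
    2 * (b * D * P⁻¹) ≤ a * D ↔ 2 * b / a ≤ P := by
  have h : 2 * (b * D * P⁻¹) = 2 * b / P * D := by field_simp
  rw [h, mul_le_mul_iff_of_pos_right hD, div_le_iff₀ hP, div_le_iff₀ ha, mul_comm P]

/-- Finalisation resumes at epoch `k` (voting validator holds ≥ 2/3 of
the total deposit) iff `∏_{i<k}(1+ρ_i) ≥ 2(1−α)/α`. -/
theorem stmt5 (α D0 : ℝ) (ρ : ℕ → ℝ)
    (hα : α ∈ Set.Ioo (0:ℝ) (2/3)) (hD0 : 0 < D0)
    (hρ : ∀ i, 0 < ρ i) (k : ℕ) :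
    (2/3) * (α * D0 + (1 - α) * D0 * (∏ i ∈ Finset.range k, (1 + ρ i))⁻¹) ≤ α * D0 ↔
      2 * (1 - α) / α ≤ ∏ i ∈ Finset.range k, (1 + ρ i) := by
  have hP : 0 < ∏ i ∈ Finset.range k, (1 + ρ i) :=
    Finset.prod_pos fun i _ => by linarith [hρ i]
  rw [two_thirds_mul_add_le_iff]
  exact two_mul_mul_inv_le_iff hα.1 hD0 hP
end

section
/- Consider the worst-case delay scenario: at each epoch i the honest voting fraction is α_i, and the adversary votes with fraction δ_i = (2/3 − α_i)/(1 − α_i) of its remaining validators (the maximum δ so that total voting weight marginally fails the 2/3 threshold), whenever α_i ≤ 2/3. If the honest deposit stays constant and the non-voting adversarial deposit shrinks by factor (1+ρ_i)^{−1} with ρ_i → ∞, then the limit α of the increasing sequence α_i satisfies α > 2/3; hence finalisation resumes after finitely many epochs. -/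
/-! Suppose the honest fraction `a i` never exceeds `2/3`. Then the adversarial deposit stays
positive, and `a i ≤ 2/3` keeps it above half the honest deposit. On the other hand, the
non-voting adversarial share `1 - δ = (1/3)/(1 - a)` is at least `1/3`, so once `ρ i ≥ 1` the
adversarial deposit loses at least a sixth of itself per epoch and tends to `0`. -/

open Filter Topology

/-- The paper's `δ_i`, as a function of `α_i`. -/
noncomputable def voteFraction (a : ℝ) : ℝ := (2/3 - a) / (1 - a)

/-- The paper's ratio `D_{ν̃,i+1} / D_{ν̃,i}`, as a function of `α_i` and `ρ_i`. -/
noncomputable def retention (a ρ : ℝ) : ℝ :=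
  voteFraction a + (1 - voteFraction a) * (1 + ρ)⁻¹

lemma one_sub_voteFraction {a : ℝ} (ha : a < 1) : 1 - voteFraction a = (1/3) / (1 - a) := by
  have : 1 - a ≠ 0 := by linarith
  unfold voteFraction
  field_simp
  ring

lemma one_third_le_one_sub_voteFraction {a : ℝ} (ha₀ : 0 ≤ a) (ha : a < 1) :
    1/3 ≤ 1 - voteFraction a := by
  rw [one_sub_voteFraction ha, le_div_iff₀ (by linarith)]
  linarith

lemma voteFraction_nonneg {a : ℝ} (ha : a ≤ 2/3) : 0 ≤ voteFraction a :=
  div_nonneg (by linarith) (by linarith)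

lemma voteFraction_lt_one {a : ℝ} (ha : a < 1) : voteFraction a < 1 := by
  have := one_sub_voteFraction ha
  have : 0 < (1/3) / (1 - a) := div_pos (by norm_num) (by linarith)
  linarith

lemma retention_pos {a ρ : ℝ} (ha : a ≤ 2/3) (hρ : 0 < ρ) : 0 < retention a ρ :=
  add_pos_of_nonneg_of_pos (voteFraction_nonneg ha)
    (mul_pos (by linarith [voteFraction_lt_one (a := a) (by linarith)]) (by positivity))

lemma retention_le_five_sixths {a ρ : ℝ} (ha₀ : 0 ≤ a) (ha : a < 1) (hρ : 1 ≤ ρ) :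
    retention a ρ ≤ 5/6 := by
  have hδ := one_third_le_one_sub_voteFraction ha₀ ha
  have ht : (1 + ρ)⁻¹ ≤ 1/2 := by
    rw [inv_le_comm₀ (by linarith) (by norm_num)]
    linarith
  have : 1/3 * (1/2) ≤ (1 - voteFraction a) * (1 - (1 + ρ)⁻¹) :=
    mul_le_mul hδ (by linarith) (by norm_num) (by linarith)
  unfold retention
  linarith

lemma half_le_of_div_add_le_two_thirds {c D : ℝ} (hcD : 0 < c + D) (h : c / (c + D) ≤ 2/3) :
    c / 2 ≤ D := by
  rw [div_le_iff₀ hcD] at h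
  linarith

theorem stmt6_general (α0 D0 : ℝ) (ρ Dm a : ℕ → ℝ)
    (hα0 : α0 ∈ Set.Ioc (0:ℝ) (2/3)) (hD0 : 0 < D0)
    (hρpos : ∀ i, 0 < ρ i)
    (hρtop : Filter.Tendsto ρ Filter.atTop Filter.atTop)
    (hDm0 : Dm 0 = (1 - α0) * D0)
    (ha : ∀ i, a i = α0 * D0 / (α0 * D0 + Dm i))
    (hrec : ∀ i, Dm (i+1) =
      ((2/3 - a i) / (1 - a i)
        + (1 - (2/3 - a i) / (1 - a i)) * (1 + ρ i)⁻¹) * Dm i) :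
    ∃ T : ℕ, 2/3 < a T := by
  by_contra! hle
  have hrec' : ∀ i, Dm (i + 1) = retention (a i) (ρ i) * Dm i := hrec
  have hc : 0 < α0 * D0 := mul_pos hα0.1 hD0
  have hDm_pos : ∀ i, 0 < Dm i := by
    intro i
    induction i with
    | zero => rw [hDm0]; exact mul_pos (by linarith [hα0.2]) hD0
    | succ i ih => rw [hrec' i]; exact mul_pos (retention_pos (hle i) (hρpos i)) ih
  have hDm_ge : ∀ i, α0 * D0 / 2 ≤ Dm i := fun i =>
    half_le_of_div_add_le_two_thirds (by linarith [hDm_pos i]) (ha i ▸ hle i)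
  have hdecay : ∀ᶠ i in atTop, ‖Dm (i + 1)‖ ≤ 5/6 * ‖Dm i‖ := by
    filter_upwards [hρtop.eventually_ge_atTop 1] with i hρi
    have ha₀ : 0 ≤ a i := by rw [ha i]; exact div_nonneg hc.le (by linarith [hDm_pos i])
    rw [Real.norm_of_nonneg (hDm_pos _).le, Real.norm_of_nonneg (hDm_pos _).le, hrec' i]
    exact mul_le_mul_of_nonneg_right
      (retention_le_five_sixths ha₀ (by linarith [hle i]) hρi) (hDm_pos i).le
  have hlim : Tendsto Dm atTop (𝓝 0) :=
    (summable_of_ratio_norm_eventually_le (by norm_num) hdecay).tendsto_atTop_zero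
  linarith [ge_of_tendsto' hlim hDm_ge]

/-- Worst-case delay scenario: honest deposit constant at `α0·D0`, the
adversary votes with fraction `δ_i = (2/3 − α_i)/(1 − α_i)` and its non-voting part
shrinks by `(1+ρ_i)⁻¹` with `ρ_i` increasing and unbounded; then the honest fraction
eventually exceeds `2/3`, so finalisation resumes after finitely many epochs. -/
theorem stmt6 (α0 D0 : ℝ) (ρ Dm a : ℕ → ℝ)
    (hα0 : α0 ∈ Set.Ioc (0:ℝ) (2/3)) (hD0 : 0 < D0)
    (hρpos : ∀ i, 0 < ρ i) (hρmono : Monotone ρ)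
    (hρtop : Filter.Tendsto ρ Filter.atTop Filter.atTop)
    (hDm0 : Dm 0 = (1 - α0) * D0)
    (ha : ∀ i, a i = α0 * D0 / (α0 * D0 + Dm i))
    (hrec : ∀ i, Dm (i+1) =
      ((2/3 - a i) / (1 - a i)
        + (1 - (2/3 - a i) / (1 - a i)) * (1 + ρ i)⁻¹) * Dm i) :
    ∃ T : ℕ, 2/3 < a T :=
  stmt6_general α0 D0 ρ Dm a hα0 hD0 hρpos hρtop hDm0 ha hrec
end

section
/- Under always-justification, if validator ν with stake fraction α abstains from voting, ν's loss factor is ρ/(1+ρ)·(1 + (1/2)(μρ + α)), which strictly exceeds the loss (1/2)αρ of each other voting validator and the loss ρ/(1+ρ)·(α/2) of each non-voting validator, for all ρ > 0, α ∈ (0,1), μ ∈ (0,1]. -/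
noncomputable section

namespace AlwaysJustification

def abstainerLoss (ρ α μ : ℝ) : ℝ := ρ / (1 + ρ) * (1 + (1/2) * (μ * ρ + α))

def voterLoss (ρ α : ℝ) : ℝ := (1/2) * α * ρ

def nonVoterLoss (ρ α : ℝ) : ℝ := ρ / (1 + ρ) * (α / 2)

theorem abstainerLoss_sub_voterLoss {ρ : ℝ} (hρ : 1 + ρ ≠ 0) (α μ : ℝ) :
    abstainerLoss ρ α μ - voterLoss ρ α = ρ / (1 + ρ) * (1 + (1/2) * ((μ - α) * ρ)) := by
  unfold abstainerLoss voterLoss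
  field_simp
  ring

theorem voterLoss_lt_abstainerLoss {ρ α μ : ℝ} (hρ : 0 < ρ) (hαμ : α ≤ μ) :
    voterLoss ρ α < abstainerLoss ρ α μ := by
  have hgap : 0 ≤ (μ - α) * ρ := mul_nonneg (sub_nonneg.2 hαμ) hρ.le
  rw [← sub_pos, abstainerLoss_sub_voterLoss (by positivity)]
  exact mul_pos (by positivity) (by linarith)

theorem nonVoterLoss_lt_abstainerLoss {ρ μ : ℝ} (hρ : 0 < ρ) (hμ : 0 ≤ μ) (α : ℝ) :
    nonVoterLoss ρ α < abstainerLoss ρ α μ :=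
  mul_lt_mul_of_pos_left (by linarith [mul_nonneg hμ hρ.le]) (by positivity)

end AlwaysJustification

end

theorem stmt13_general (ρ α μ : ℝ) (hρ : 0 < ρ)
    (hμ : μ ∈ Set.Ioc (0:ℝ) 1) (hαμ : α ≤ μ) :
    (1/2) * α * ρ < ρ / (1 + ρ) * (1 + (1/2) * (μ * ρ + α)) ∧
    ρ / (1 + ρ) * (α / 2) < ρ / (1 + ρ) * (1 + (1/2) * (μ * ρ + α)) :=
  ⟨AlwaysJustification.voterLoss_lt_abstainerLoss hρ hαμ,
    AlwaysJustification.nonVoterLoss_lt_abstainerLoss hρ hμ.1.le α⟩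

/-- Under always-justification, the loss factor of an abstaining
validator `ν`, namely `ρ/(1+ρ)·(1 + (1/2)(μρ + α))`, strictly exceeds both the loss
`(1/2)αρ` of each voting validator and the loss `ρ/(1+ρ)·(α/2)` of each non-voting
validator. -/
theorem stmt13 (ρ α μ : ℝ) (hρ : 0 < ρ)
    (hα : α ∈ Set.Ioo (0:ℝ) 1) (hμ : μ ∈ Set.Ioc (0:ℝ) 1) (hαμ : α ≤ μ) :
    (1/2) * α * ρ < ρ / (1 + ρ) * (1 + (1/2) * (μ * ρ + α)) ∧
    ρ / (1 + ρ) * (α / 2) < ρ / (1 + ρ) * (1 + (1/2) * (μ * ρ + α)) :=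
  stmt13_general ρ α μ hρ hμ hαμ
end

section
/- If the total deposit evolves as D_{i+1} = α·D_0 + (1−α)·D_0·∏_{j=0}^{i}(1+ρ_j)^{−1} with ρ_j ≥ β·j, β > 0, then D_i → α·D_0 as i → ∞; in particular the voting validators' share α·D_0/D_i converges to 1. -/
/-!
Since `ρ j ≥ β j → ∞`, each factor `1 + ρ j` is at least `1` and the factors tend to infinity, so the
partial products `∏_{j<i} (1 + ρ j)` (which dominate their last factor) tend to infinity. Hence their
inverses tend to `0`, giving `D i → α D₀`, and `α D₀ / D i → 1` because `α D₀ ≠ 0`.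
-/

open Filter Finset Topology

section OrderedSemiring

variable {R : Type*} [CommSemiring R] [PartialOrder R] [IsOrderedRing R] {a : ℕ → R}

theorem le_prod_range_succ_of_one_le (ha : ∀ j, 1 ≤ a j) (i : ℕ) :
    a i ≤ ∏ j ∈ range (i + 1), a j := by
  calc a i = ∏ j ∈ {i}, a j := (prod_singleton a i).symm
    _ ≤ ∏ j ∈ range (i + 1), a j :=
      prod_le_prod_of_subset_of_one_le (by simp) (fun j _ => zero_le_one.trans (ha j))
        (fun j _ _ => ha j)

theorem tendsto_prod_range_atTop_of_one_le (ha : ∀ j, 1 ≤ a j)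
    (h : Tendsto a atTop atTop) :
    Tendsto (fun i => ∏ j ∈ range i, a j) atTop atTop :=
  (tendsto_add_atTop_iff_nat 1).mp <|
    tendsto_atTop_mono (le_prod_range_succ_of_one_le ha) h

end OrderedSemiring

/-- If `D_i = α·D_0 + (1−α)·D_0·(∏_{j<i}(1+ρ_j))⁻¹` with `ρ_j ≥ β·j`,
`β > 0`, then `D_i → α·D_0`, and the voting validators' share `α·D_0 / D_i → 1`. -/
theorem stmt19 (α D0 β : ℝ) (ρ D : ℕ → ℝ)
    (hα : α ∈ Set.Ioo (0:ℝ) 1) (hD0 : 0 < D0) (hβ : 0 < β)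
    (hρ : ∀ j : ℕ, β * j ≤ ρ j)
    (hD : ∀ i, D i = α * D0 + (1 - α) * D0 * (∏ j ∈ Finset.range i, (1 + ρ j))⁻¹) :
    Filter.Tendsto D Filter.atTop (nhds (α * D0)) ∧
    Filter.Tendsto (fun i => α * D0 / D i) Filter.atTop (nhds 1) := by
  have hlin : Tendsto (fun j : ℕ => 1 + β * j) atTop atTop :=
    tendsto_atTop_add_const_left _ _ (tendsto_natCast_atTop_atTop.const_mul_atTop hβ)
  have hlin_le : ∀ j : ℕ, 1 + β * j ≤ 1 + ρ j := fun j => by linarith [hρ j]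
  have hone : ∀ j : ℕ, 1 ≤ 1 + ρ j := fun j =>
    (le_add_of_nonneg_right (by positivity)).trans (hlin_le j)
  have hprod : Tendsto (fun i => ∏ j ∈ range i, (1 + ρ j)) atTop atTop :=
    tendsto_prod_range_atTop_of_one_le hone (tendsto_atTop_mono hlin_le hlin)
  have hDlim : Tendsto D atTop (𝓝 (α * D0)) := by
    have := (hprod.inv_tendsto_atTop.const_mul ((1 - α) * D0)).const_add (α * D0)
    rw [mul_zero, add_zero] at this
    exact this.congr fun i => (hD i).symm
  have hne : α * D0 ≠ 0 := mul_ne_zero hα.1.ne' hD0.ne'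
  refine ⟨hDlim, ?_⟩
  rw [← div_self hne]
  exact tendsto_const_nhds.div hDlim hne
end
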